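/- arXiv:2201.13158 — 2 statements merged into one kernel-verified Lean document; each statement's English description precedes it below -/
import Mathlib

section
/- (Additive separability) For every player i define u_i(j) = 1 + |{b ∈ N⁺_i : j ▷_i b}| for j ∈ N⁺_i, u_i(j) = −(1 + |{f ∈ N⁻_i : f ▷_i j}|) for j ∈ N⁻_i, and u_i(j) = 0 for all other players j ≠ i. Then for all coalitions A, B containing i: δ(⊵_i,A) ≤ δ(⊵_i,B) if and only if Σ_{j ∈ A∖{i}} u_i(j) ≥ Σ_{j ∈ B∖{i}} u_i(j). Hence the preferences of a FEN-hedonic game with distance-based preferences are additively separable. -/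
/-! Basic machinery: weak orders, linear extensions, Kendall-tau,
and the directed Hausdorff–Kendall-tau distance. -/

section Orders

variable {P : Type*}

/-- The strict part `x ▷ y` of a relation `R`. -/
def strictOf (R : P → P → Prop) (x y : P) : Prop := R x y ∧ ¬ R y x

/-- The indifference part `x ∼ y` of a relation `R`. -/
def indiffOf (R : P → P → Prop) (x y : P) : Prop := R x y ∧ R y x

/-- `R` is a weak order (total preorder) on the finite set `S`. -/
structure IsWeakOrderOn (S : Finset P) (R : P → P → Prop) : Prop where
  refl : ∀ x ∈ S, R x x
  trans : ∀ x ∈ S, ∀ y ∈ S, ∀ z ∈ S, R x y → R y z → R x z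
  total : ∀ x ∈ S, ∀ y ∈ S, R x y ∨ R y x

/-- `A` is a linear extension on `S` of the weak order `R`: a strict total
order on `S` which is consistent with the strict part of `R`. -/
structure IsLinExtOn (S : Finset P) (R : P → P → Prop) (A : P → P → Prop) : Prop where
  irrefl : ∀ x ∈ S, ¬ A x x
  trans : ∀ x ∈ S, ∀ y ∈ S, ∀ z ∈ S, A x y → A y z → A x z
  total : ∀ x ∈ S, ∀ y ∈ S, x ≠ y → A x y ∨ A y x
  extend : ∀ x ∈ S, ∀ y ∈ S, strictOf R x y → A x y

/-- The Kendall-tau distance between two strict (linear) orders on `S`: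
the number of pairs ordered oppositely by the two orders. -/
noncomputable def kendallTau (S : Finset P) (A B : P → P → Prop) : ℕ :=
  Set.ncard {p : P × P | p.1 ∈ S ∧ p.2 ∈ S ∧ A p.1 p.2 ∧ B p.2 p.1}

/-- The directed Hausdorff–Kendall-tau distance `→τ(R1,R2)` between weak orders on `S`:
the maximum over linear extensions `B` of `R2` of the minimum over linear
extensions `A` of `R1` of `τ(A,B)`. -/
noncomputable def dirTau (S : Finset P) (R1 R2 : P → P → Prop) : ℕ :=
  sSup { n : ℕ | ∃ B : P → P → Prop, IsLinExtOn S R2 B ∧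
    n = sInf { m : ℕ | ∃ A : P → P → Prop, IsLinExtOn S R1 A ∧ m = kendallTau S A B } }

/-- The (undirected) Hausdorff–Kendall-tau distance `τ*`. -/
noncomputable def hkTau (S : Finset P) (R1 R2 : P → P → Prop) : ℕ :=
  max (dirTau S R1 R2) (dirTau S R2 R1)

end Orders

/-! FEN-hedonic games with distance-based preferences. -/

section Game

/-- A FEN preference for player `i`: disjoint sets of friends and enemies
(not containing `i`) together with weak orders on the friends and on the enemies. -/
structure FENPref (P : Type*) (i : P) where
  friends : Finset P
  enemies : Finset P
  Rp : P → P → Prop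
  Rm : P → P → Prop
  disj : Disjoint friends enemies
  self_not_friend : i ∉ friends
  self_not_enemy : i ∉ enemies
  wo_p : IsWeakOrderOn friends Rp
  wo_m : IsWeakOrderOn enemies Rm

variable {P : Type*} {i : P}

/-- The weak order `⊵⁺_i` on `N⁺_i ∪ {i}`: the friends, ordered by `⊵_i`,
all strictly above `i`. -/
def FENPref.prefPlus (pr : FENPref P i) (x y : P) : Prop :=
  (x ∈ pr.friends ∧ y ∈ pr.friends ∧ pr.Rp x y) ∨
  (x ∈ pr.friends ∧ y = i) ∨
  (x = i ∧ y = i)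

/-- The weak order `⊵⁻_i` on `N⁻_i ∪ {i}`: `i` strictly above all enemies,
which are ordered by `⊵_i`. -/
def FENPref.prefMinus (pr : FENPref P i) (x y : P) : Prop :=
  (x = i ∧ y = i) ∨
  (x = i ∧ y ∈ pr.enemies) ∨
  (x ∈ pr.enemies ∧ y ∈ pr.enemies ∧ pr.Rm x y)

/-- The weak order `C⁺_i` on `N⁺_i ∪ {i}`: friends in `C` strictly above `i`,
ordered by `⊵_i`; friends not in `C` strictly below `i`, ordered by the reverse of `⊵_i`. -/
def FENPref.coalPlus (pr : FENPref P i) (C : Finset P) (x y : P) : Prop :=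
  (x ∈ pr.friends ∧ x ∈ C ∧ y ∈ pr.friends ∧ y ∈ C ∧ pr.Rp x y) ∨
  ((x ∈ pr.friends ∧ x ∈ C) ∧ (y = i ∨ (y ∈ pr.friends ∧ y ∉ C))) ∨
  (x = i ∧ (y = i ∨ (y ∈ pr.friends ∧ y ∉ C))) ∨
  (x ∈ pr.friends ∧ x ∉ C ∧ y ∈ pr.friends ∧ y ∉ C ∧ pr.Rp y x)

/-- The weak order `C⁻_i` on `N⁻_i ∪ {i}`: enemies in `C` strictly above `i`,
ordered by the reverse of `⊵_i`; enemies not in `C` strictly below `i`, ordered by `⊵_i`. -/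
def FENPref.coalMinus (pr : FENPref P i) (C : Finset P) (x y : P) : Prop :=
  (x ∈ pr.enemies ∧ x ∈ C ∧ y ∈ pr.enemies ∧ y ∈ C ∧ pr.Rm y x) ∨
  ((x ∈ pr.enemies ∧ x ∈ C) ∧ (y = i ∨ (y ∈ pr.enemies ∧ y ∉ C))) ∨
  (x = i ∧ (y = i ∨ (y ∈ pr.enemies ∧ y ∉ C))) ∨
  (x ∈ pr.enemies ∧ x ∉ C ∧ y ∈ pr.enemies ∧ y ∉ C ∧ pr.Rm x y)

variable [DecidableEq P]

/-- `δ⁺(⊵_i, C) = →τ(⊵⁺_i, C⁺_i)`. -/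
noncomputable def FENPref.deltaPlus (pr : FENPref P i) (C : Finset P) : ℕ :=
  dirTau (insert i pr.friends) pr.prefPlus (pr.coalPlus C)

/-- `δ⁻(⊵_i, C) = →τ(⊵⁻_i, C⁻_i)`. -/
noncomputable def FENPref.deltaMinus (pr : FENPref P i) (C : Finset P) : ℕ :=
  dirTau (insert i pr.enemies) pr.prefMinus (pr.coalMinus C)

/-- `δ(⊵_i, C) = δ⁺(⊵_i, C) + δ⁻(⊵_i, C)`. -/
noncomputable def FENPref.delta (pr : FENPref P i) (C : Finset P) : ℕ :=
  pr.deltaPlus C + pr.deltaMinus C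

end Game

section DirTauEq
variable {P : Type*}

lemma IsLinExtOn.asymm {S : Finset P} {R A : P → P → Prop} (h : IsLinExtOn S R A)
    {x y : P} (hx : x ∈ S) (hy : y ∈ S) (hxy : A x y) : ¬ A y x := fun hyx =>
  h.irrefl x hx (h.trans x hx y hy x hx hxy hyx)

/-- A strict total order on `S`. -/
structure IsSTOOn (S : Finset P) (T : P → P → Prop) : Prop where
  irrefl : ∀ x ∈ S, ¬ T x x
  trans : ∀ x ∈ S, ∀ y ∈ S, ∀ z ∈ S, T x y → T y z → T x z
  total : ∀ x ∈ S, ∀ y ∈ S, x ≠ y → T x y ∨ T y x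

lemma IsLinExtOn.sto {S : Finset P} {R A : P → P → Prop} (h : IsLinExtOn S R A) :
    IsSTOOn S A := ⟨h.irrefl, h.trans, h.total⟩

lemma IsSTOOn.flip {S : Finset P} {T : P → P → Prop} (h : IsSTOOn S T) :
    IsSTOOn S (fun x y => T y x) :=
  ⟨h.irrefl, fun x hx y hy z hz hxy hyz => h.trans z hz y hy x hx hyz hxy,
   fun x hx y hy hne => (h.total y hy x hx (Ne.symm hne))⟩

/-- Refine a weak order by a tiebreaker. -/
def refineOrd (R T : P → P → Prop) (x y : P) : Prop :=
  strictOf R x y ∨ (indiffOf R x y ∧ T x y)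

lemma refine_linExt {S : Finset P} {R T : P → P → Prop}
    (hR : IsWeakOrderOn S R) (hT : IsSTOOn S T) : IsLinExtOn S R (refineOrd R T) := by
  constructor
  · intro x hx h
    rcases h with ⟨h1, h2⟩ | ⟨_, h⟩
    · exact h2 h1
    · exact hT.irrefl x hx h
  · intro x hx y hy z hz hxy hyz
    rcases hxy with ⟨hxy, hnyx⟩ | ⟨⟨hxy, hyx⟩, ht1⟩ <;>
      rcases hyz with ⟨hyz, hnzy⟩ | ⟨⟨hyz, hzy⟩, ht2⟩
    · exact Or.inl ⟨hR.trans x hx y hy z hz hxy hyz,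
        fun hzx => hnyx (hR.trans y hy z hz x hx hyz hzx)⟩
    · exact Or.inl ⟨hR.trans x hx y hy z hz hxy hyz,
        fun hzx => hnyx (hR.trans y hy z hz x hx hyz hzx)⟩
    · exact Or.inl ⟨hR.trans x hx y hy z hz hxy hyz,
        fun hzx => hnzy (hR.trans z hz x hx y hy hzx hxy)⟩
    · exact Or.inr ⟨⟨hR.trans x hx y hy z hz hxy hyz,
        hR.trans z hz y hy x hx hzy hyx⟩, hT.trans x hx y hy z hz ht1 ht2⟩
  · intro x hx y hy hne
    rcases hR.total x hx y hy with h | h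
    · by_cases h' : R y x
      · rcases hT.total x hx y hy hne with ht | ht
        · exact Or.inl (Or.inr ⟨⟨h, h'⟩, ht⟩)
        · exact Or.inr (Or.inr ⟨⟨h', h⟩, ht⟩)
      · exact Or.inl (Or.inl ⟨h, h'⟩)
    · by_cases h' : R x y
      · rcases hT.total x hx y hy hne with ht | ht
        · exact Or.inl (Or.inr ⟨⟨h', h⟩, ht⟩)
        · exact Or.inr (Or.inr ⟨⟨h, h'⟩, ht⟩)
      · exact Or.inr (Or.inl ⟨h, h'⟩)
  · intro x _ y _ h
    exact Or.inl h

lemma exists_sto (S : Finset P) : ∃ T : P → P → Prop, IsSTOOn S T := by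
  classical
  refine ⟨fun x y => (if hx : x ∈ S then ((S.equivFin ⟨x, hx⟩ : Fin S.card) : ℕ) else 0) <
      (if hy : y ∈ S then ((S.equivFin ⟨y, hy⟩ : Fin S.card) : ℕ) else 0), ?_, ?_, ?_⟩
  · intro x _ h; exact lt_irrefl _ h
  · intro x _ y _ z _ h1 h2; exact lt_trans h1 h2
  · intro x hx y hy hne
    rcases lt_trichotomy (if hx : x ∈ S then ((S.equivFin ⟨x, hx⟩ : Fin S.card) : ℕ) else 0)
      (if hy : y ∈ S then ((S.equivFin ⟨y, hy⟩ : Fin S.card) : ℕ) else 0) with h | h | h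
    · exact Or.inl h
    · exfalso
      rw [dif_pos hx, dif_pos hy] at h
      exact hne (Subtype.ext_iff.mp (S.equivFin.injective (Fin.val_injective h)))
    · exact Or.inr h

lemma pairs_finite (S : Finset P) (Q : P × P → Prop) :
    {p : P × P | p.1 ∈ S ∧ p.2 ∈ S ∧ Q p}.Finite :=
  (S.finite_toSet.prod S.finite_toSet).subset (by rintro ⟨x, y⟩ ⟨hx, hy, _⟩; exact ⟨hx, hy⟩)

theorem dirTau_eq_ncard {S : Finset P} {R1 R2 : P → P → Prop}
    (h1 : IsWeakOrderOn S R1) (h2 : IsWeakOrderOn S R2) :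
    dirTau S R1 R2 = Set.ncard {p : P × P |
      p.1 ∈ S ∧ p.2 ∈ S ∧ strictOf R1 p.1 p.2 ∧ ¬ strictOf R2 p.1 p.2} := by
  set D : Set (P × P) := {p : P × P |
      p.1 ∈ S ∧ p.2 ∈ S ∧ strictOf R1 p.1 p.2 ∧ ¬ strictOf R2 p.1 p.2} with hD
  have hDfin : D.Finite := pairs_finite S _
  -- upper bound for every B
  have hupper : ∀ B : P → P → Prop, IsLinExtOn S R2 B →
      sInf {m : ℕ | ∃ A : P → P → Prop, IsLinExtOn S R1 A ∧ m = kendallTau S A B} ≤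
        D.ncard := by
    intro B hB
    have hA : IsLinExtOn S R1 (refineOrd R1 B) := refine_linExt h1 hB.sto
    have hk : kendallTau S (refineOrd R1 B) B ≤ D.ncard := by
      apply Set.ncard_le_ncard _ hDfin
      rintro ⟨x, y⟩ ⟨hx, hy, hA1, hB1⟩
      have hs1 : strictOf R1 x y := by
        rcases hA1 with h | ⟨_, hxy⟩
        · exact h
        · exact absurd hB1 (hB.asymm hx hy hxy)
      exact ⟨hx, hy, hs1, fun hs2 => (hB.asymm hy hx hB1) (hB.extend x hx y hy hs2)⟩
    exact le_trans (Nat.sInf_le ⟨_, hA, rfl⟩) hk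
  obtain ⟨T, hT⟩ := exists_sto S
  have hA1 : IsLinExtOn S R1 (refineOrd R1 T) := refine_linExt h1 hT
  set A1 := refineOrd R1 T with hA1def
  set B0 := refineOrd R2 (fun x y => A1 y x) with hB0def
  have hB0 : IsLinExtOn S R2 B0 := refine_linExt h2 hA1.sto.flip
  have key : sInf {m : ℕ | ∃ A : P → P → Prop,
      IsLinExtOn S R1 A ∧ m = kendallTau S A B0} = D.ncard := by
    refine le_antisymm (hupper B0 hB0) (le_csInf ⟨_, A1, hA1, rfl⟩ ?_)
    rintro m ⟨A, hA, rfl⟩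
    apply Set.ncard_le_ncard _ (pairs_finite S _)
    rintro ⟨x, y⟩ ⟨hx, hy, hs1, hns2⟩
    refine ⟨hx, hy, hA.extend x hx y hy hs1, ?_⟩
    have hyx : R2 y x := by
      rcases h2.total x hx y hy with h | h
      · by_contra hn; exact hns2 ⟨h, hn⟩
      · exact h
    by_cases hxy : R2 x y
    · exact Or.inr ⟨⟨hyx, hxy⟩, hA1.extend x hx y hy hs1⟩
    · exact Or.inl ⟨hyx, hxy⟩
  have mem : D.ncard ∈ {n : ℕ | ∃ B : P → P → Prop, IsLinExtOn S R2 B ∧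
      n = sInf {m : ℕ | ∃ A : P → P → Prop, IsLinExtOn S R1 A ∧ m = kendallTau S A B}} :=
    ⟨B0, hB0, key.symm⟩
  have bdd : BddAbove {n : ℕ | ∃ B : P → P → Prop, IsLinExtOn S R2 B ∧
      n = sInf {m : ℕ | ∃ A : P → P → Prop, IsLinExtOn S R1 A ∧ m = kendallTau S A B}} := by
    refine ⟨D.ncard, ?_⟩
    rintro n ⟨B, hB, rfl⟩
    exact hupper B hB
  exact le_antisymm (csSup_le ⟨_, mem⟩ (by rintro n ⟨B, hB, rfl⟩; exact hupper B hB))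
    (le_csSup bdd mem)

end DirTauEq
section GameLemmas

variable {P : Type*} [DecidableEq P] {i : P}

lemma wo_prefPlus (pr : FENPref P i) : IsWeakOrderOn (insert i pr.friends) pr.prefPlus := by
  have hiF := pr.self_not_friend
  refine ⟨?_, ?_, ?_⟩
  · intro x hx
    rcases Finset.mem_insert.mp hx with rfl | hx
    · exact Or.inr (Or.inr ⟨rfl, rfl⟩)
    · exact Or.inl ⟨hx, hx, pr.wo_p.refl x hx⟩
  · intro x hx y hy z hz hxy hyz
    rcases hxy with ⟨hxF, hyF, hr1⟩ | ⟨hxF, rfl⟩ | ⟨rfl, rfl⟩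
    · rcases hyz with ⟨_, hzF, hr2⟩ | ⟨_, rfl⟩ | ⟨rfl, _⟩
      · exact Or.inl ⟨hxF, hzF, pr.wo_p.trans x hxF y hyF z hzF hr1 hr2⟩
      · exact Or.inr (Or.inl ⟨hxF, rfl⟩)
      · exact absurd hyF hiF
    · rcases hyz with ⟨hyF, _, _⟩ | ⟨hyF, rfl⟩ | ⟨_, rfl⟩
      · exact absurd hyF hiF
      · exact absurd hyF hiF
      · exact Or.inr (Or.inl ⟨hxF, rfl⟩)
    · rcases hyz with ⟨hyF, _, _⟩ | ⟨hyF, _⟩ | ⟨_, rfl⟩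
      · exact absurd hyF hiF
      · exact absurd hyF hiF
      · exact Or.inr (Or.inr ⟨rfl, rfl⟩)
  · intro x hx y hy
    rcases Finset.mem_insert.mp hx with rfl | hxF
    · rcases Finset.mem_insert.mp hy with rfl | hyF
      · exact Or.inl (Or.inr (Or.inr ⟨rfl, rfl⟩))
      · exact Or.inr (Or.inr (Or.inl ⟨hyF, rfl⟩))
    · rcases Finset.mem_insert.mp hy with rfl | hyF
      · exact Or.inl (Or.inr (Or.inl ⟨hxF, rfl⟩))
      · rcases pr.wo_p.total x hxF y hyF with h | h
        · exact Or.inl (Or.inl ⟨hxF, hyF, h⟩)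
        · exact Or.inr (Or.inl ⟨hyF, hxF, h⟩)

lemma wo_prefMinus (pr : FENPref P i) : IsWeakOrderOn (insert i pr.enemies) pr.prefMinus := by
  have hiE := pr.self_not_enemy
  refine ⟨?_, ?_, ?_⟩
  · intro x hx
    rcases Finset.mem_insert.mp hx with rfl | hx
    · exact Or.inl ⟨rfl, rfl⟩
    · exact Or.inr (Or.inr ⟨hx, hx, pr.wo_m.refl x hx⟩)
  · intro x hx y hy z hz hxy hyz
    rcases hxy with ⟨rfl, rfl⟩ | ⟨rfl, hyE⟩ | ⟨hxE, hyE, hr1⟩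
    · exact hyz
    · rcases hyz with ⟨rfl, _⟩ | ⟨rfl, _⟩ | ⟨_, hzE, _⟩
      · exact absurd hyE hiE
      · exact absurd hyE hiE
      · exact Or.inr (Or.inl ⟨rfl, hzE⟩)
    · rcases hyz with ⟨rfl, _⟩ | ⟨rfl, _⟩ | ⟨_, hzE, hr2⟩
      · exact absurd hyE hiE
      · exact absurd hyE hiE
      · exact Or.inr (Or.inr ⟨hxE, hzE, pr.wo_m.trans x hxE y hyE z hzE hr1 hr2⟩)
  · intro x hx y hy
    rcases Finset.mem_insert.mp hx with rfl | hxE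
    · rcases Finset.mem_insert.mp hy with rfl | hyE
      · exact Or.inl (Or.inl ⟨rfl, rfl⟩)
      · exact Or.inl (Or.inr (Or.inl ⟨rfl, hyE⟩))
    · rcases Finset.mem_insert.mp hy with rfl | hyE
      · exact Or.inr (Or.inr (Or.inl ⟨rfl, hxE⟩))
      · rcases pr.wo_m.total x hxE y hyE with h | h
        · exact Or.inl (Or.inr (Or.inr ⟨hxE, hyE, h⟩))
        · exact Or.inr (Or.inr (Or.inr ⟨hyE, hxE, h⟩))

lemma wo_coalPlus (pr : FENPref P i) (C : Finset P) :
    IsWeakOrderOn (insert i pr.friends) (pr.coalPlus C) := by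
  have hiF := pr.self_not_friend
  refine ⟨?_, ?_, ?_⟩
  · intro x hx
    rcases Finset.mem_insert.mp hx with rfl | hx
    · exact Or.inr (Or.inr (Or.inl ⟨rfl, Or.inl rfl⟩))
    · by_cases hxC : x ∈ C
      · exact Or.inl ⟨hx, hxC, hx, hxC, pr.wo_p.refl x hx⟩
      · exact Or.inr (Or.inr (Or.inr ⟨hx, hxC, hx, hxC, pr.wo_p.refl x hx⟩))
  · intro x hx y hy z hz hxy hyz
    rcases hxy with ⟨hxF, hxC, hyF, hyC, hr1⟩ | ⟨⟨hxF, hxC⟩, hy1⟩ | ⟨rfl, hy1⟩ |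
      ⟨hxF, hxC, hyF, hyC, hr1⟩
    · rcases hyz with ⟨_, _, hzF, hzC, hr2⟩ | ⟨_, hz1⟩ | ⟨rfl, _⟩ | ⟨_, hyC', _⟩
      · exact Or.inl ⟨hxF, hxC, hzF, hzC, pr.wo_p.trans x hxF y hyF z hzF hr1 hr2⟩
      · exact Or.inr (Or.inl ⟨⟨hxF, hxC⟩, hz1⟩)
      · exact absurd hyF hiF
      · exact absurd hyC hyC'
    · rcases hy1 with rfl | ⟨hyF, hyC⟩
      · rcases hyz with ⟨hyF', _⟩ | ⟨⟨hyF', _⟩, _⟩ | ⟨_, hz1⟩ | ⟨hyF', _⟩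
        · exact absurd hyF' hiF
        · exact absurd hyF' hiF
        · exact Or.inr (Or.inl ⟨⟨hxF, hxC⟩, hz1⟩)
        · exact absurd hyF' hiF
      · rcases hyz with ⟨_, hyC', _⟩ | ⟨⟨_, hyC'⟩, _⟩ | ⟨hyi, _⟩ | ⟨_, _, hzF, hzC, _⟩
        · exact absurd hyC' hyC
        · exact absurd hyC' hyC
        · exact absurd (hyi ▸ hyF) hiF
        · exact Or.inr (Or.inl ⟨⟨hxF, hxC⟩, Or.inr ⟨hzF, hzC⟩⟩)
    · rcases hy1 with rfl | ⟨hyF, hyC⟩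
      · rcases hyz with ⟨hyF', _⟩ | ⟨⟨hyF', _⟩, _⟩ | ⟨_, hz1⟩ | ⟨hyF', _⟩
        · exact absurd hyF' hiF
        · exact absurd hyF' hiF
        · exact Or.inr (Or.inr (Or.inl ⟨rfl, hz1⟩))
        · exact absurd hyF' hiF
      · rcases hyz with ⟨_, hyC', _⟩ | ⟨⟨_, hyC'⟩, _⟩ | ⟨hyi, _⟩ | ⟨_, _, hzF, hzC, _⟩
        · exact absurd hyC' hyC
        · exact absurd hyC' hyC
        · exact absurd (hyi ▸ hyF) hiF
        · exact Or.inr (Or.inr (Or.inl ⟨rfl, Or.inr ⟨hzF, hzC⟩⟩))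
    · rcases hyz with ⟨_, hyC', _⟩ | ⟨⟨_, hyC'⟩, _⟩ | ⟨hyi, _⟩ | ⟨_, _, hzF, hzC, hr2⟩
      · exact absurd hyC' hyC
      · exact absurd hyC' hyC
      · exact absurd (hyi ▸ hyF) hiF
      · exact Or.inr (Or.inr (Or.inr ⟨hxF, hxC, hzF, hzC,
          pr.wo_p.trans z hzF y hyF x hxF hr2 hr1⟩))
  · intro x hx y hy
    rcases Finset.mem_insert.mp hx with rfl | hxF
    · rcases Finset.mem_insert.mp hy with rfl | hyF
      · exact Or.inl (Or.inr (Or.inr (Or.inl ⟨rfl, Or.inl rfl⟩)))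
      · by_cases hyC : y ∈ C
        · exact Or.inr (Or.inr (Or.inl ⟨⟨hyF, hyC⟩, Or.inl rfl⟩))
        · exact Or.inl (Or.inr (Or.inr (Or.inl ⟨rfl, Or.inr ⟨hyF, hyC⟩⟩)))
    · rcases Finset.mem_insert.mp hy with rfl | hyF
      · by_cases hxC : x ∈ C
        · exact Or.inl (Or.inr (Or.inl ⟨⟨hxF, hxC⟩, Or.inl rfl⟩))
        · exact Or.inr (Or.inr (Or.inr (Or.inl ⟨rfl, Or.inr ⟨hxF, hxC⟩⟩)))
      · by_cases hxC : x ∈ C <;> by_cases hyC : y ∈ C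
        · rcases pr.wo_p.total x hxF y hyF with h | h
          · exact Or.inl (Or.inl ⟨hxF, hxC, hyF, hyC, h⟩)
          · exact Or.inr (Or.inl ⟨hyF, hyC, hxF, hxC, h⟩)
        · exact Or.inl (Or.inr (Or.inl ⟨⟨hxF, hxC⟩, Or.inr ⟨hyF, hyC⟩⟩))
        · exact Or.inr (Or.inr (Or.inl ⟨⟨hyF, hyC⟩, Or.inr ⟨hxF, hxC⟩⟩))
        · rcases pr.wo_p.total x hxF y hyF with h | h
          · exact Or.inr (Or.inr (Or.inr (Or.inr ⟨hyF, hyC, hxF, hxC, h⟩)))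
          · exact Or.inl (Or.inr (Or.inr (Or.inr ⟨hxF, hxC, hyF, hyC, h⟩)))

/-- Swapping friends and enemies (reversing the orders). -/
def FENPref.swap (pr : FENPref P i) : FENPref P i where
  friends := pr.enemies
  enemies := pr.friends
  Rp := fun x y => pr.Rm y x
  Rm := fun x y => pr.Rp y x
  disj := pr.disj.symm
  self_not_friend := pr.self_not_enemy
  self_not_enemy := pr.self_not_friend
  wo_p := ⟨fun x hx => pr.wo_m.refl x hx,
    fun x hx y hy z hz h1 h2 => pr.wo_m.trans z hz y hy x hx h2 h1,
    fun x hx y hy => (pr.wo_m.total y hy x hx)⟩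
  wo_m := ⟨fun x hx => pr.wo_p.refl x hx,
    fun x hx y hy z hz h1 h2 => pr.wo_p.trans z hz y hy x hx h2 h1,
    fun x hx y hy => (pr.wo_p.total y hy x hx)⟩

lemma coalMinus_eq_swap (pr : FENPref P i) (C : Finset P) :
    pr.coalMinus C = (pr.swap).coalPlus C := rfl

lemma wo_coalMinus (pr : FENPref P i) (C : Finset P) :
    IsWeakOrderOn (insert i pr.enemies) (pr.coalMinus C) := by
  rw [coalMinus_eq_swap]
  exact wo_coalPlus pr.swap C

end GameLemmas
section DSets

variable {P : Type*} [DecidableEq P] {i : P}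

lemma Dplus_eq (pr : FENPref P i) (C : Finset P) :
    {p : P × P | p.1 ∈ insert i pr.friends ∧ p.2 ∈ insert i pr.friends ∧
      strictOf pr.prefPlus p.1 p.2 ∧ ¬ strictOf (pr.coalPlus C) p.1 p.2} =
    {p : P × P | (p.1 ∈ pr.friends ∧ p.1 ∉ C) ∧
      (p.2 = i ∨ (p.2 ∈ pr.friends ∧ strictOf pr.Rp p.1 p.2))} := by
  have hiF := pr.self_not_friend
  ext ⟨x, y⟩
  simp only [Set.mem_setOf_eq]
  constructor
  · rintro ⟨hx, hy, ⟨h1, h2⟩, h3⟩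
    rcases h1 with ⟨hxF, hyF, hr⟩ | ⟨hxF, rfl⟩ | ⟨rfl, rfl⟩
    · -- x, y friends, Rp x y
      have hnr : ¬ pr.Rp y x := fun h => h2 (Or.inl ⟨hyF, hxF, h⟩)
      have hxC : x ∉ C := by
        intro hxC
        apply h3
        by_cases hyC : y ∈ C
        · refine ⟨Or.inl ⟨hxF, hxC, hyF, hyC, hr⟩, ?_⟩
          rintro (⟨_, _, _, _, hr'⟩ | ⟨⟨_, hyC'⟩, hx1⟩ | ⟨hyi, _⟩ | ⟨_, hyC', _⟩)
          · exact hnr hr'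
          · rcases hx1 with rfl | ⟨_, hxC'⟩
            · exact hiF hxF
            · exact hxC' hxC
          · exact hiF (hyi ▸ hyF)
          · exact hyC' hyC
        · refine ⟨Or.inr (Or.inl ⟨⟨hxF, hxC⟩, Or.inr ⟨hyF, hyC⟩⟩), ?_⟩
          rintro (⟨_, hyC', _⟩ | ⟨⟨_, hyC'⟩, _⟩ | ⟨hyi, _⟩ | ⟨_, _, _, hxC', _⟩)
          · exact hyC hyC'
          · exact hyC hyC'
          · exact hiF (hyi ▸ hyF)
          · exact hxC' hxC
      exact ⟨⟨hxF, hxC⟩, Or.inr ⟨hyF, hr, hnr⟩⟩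
    · -- x friend, y = i
      have hxC : x ∉ C := by
        intro hxC
        apply h3
        refine ⟨Or.inr (Or.inl ⟨⟨hxF, hxC⟩, Or.inl rfl⟩), ?_⟩
        rintro (⟨hiF', _⟩ | ⟨⟨hiF', _⟩, _⟩ | ⟨_, hx1⟩ | ⟨hiF', _⟩)
        · exact hiF hiF'
        · exact hiF hiF'
        · rcases hx1 with rfl | ⟨_, hxC'⟩
          · exact hiF hxF
          · exact hxC' hxC
        · exact hiF hiF'
      exact ⟨⟨hxF, hxC⟩, Or.inl rfl⟩
    · exact absurd (Or.inr (Or.inr ⟨rfl, rfl⟩)) h2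
  · rintro ⟨⟨hxF, hxC⟩, hy⟩
    rcases hy with rfl | ⟨hyF, hr, hnr⟩
    · refine ⟨Finset.mem_insert_of_mem hxF, Finset.mem_insert_self _ _,
        ⟨Or.inr (Or.inl ⟨hxF, rfl⟩), ?_⟩, ?_⟩
      · rintro (⟨hiF', _⟩ | ⟨hiF', _⟩ | ⟨_, rfl⟩)
        · exact hiF hiF'
        · exact hiF hiF'
        · exact hiF hxF
      · rintro ⟨(⟨_, hxC', _⟩ | ⟨⟨_, hxC'⟩, _⟩ | ⟨rfl, _⟩ | ⟨_, _, hiF', _⟩), _⟩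
        · exact hxC hxC'
        · exact hxC hxC'
        · exact hiF hxF
        · exact hiF hiF'
    · refine ⟨Finset.mem_insert_of_mem hxF, Finset.mem_insert_of_mem hyF,
        ⟨Or.inl ⟨hxF, hyF, hr⟩, ?_⟩, ?_⟩
      · rintro (⟨_, _, hr'⟩ | ⟨_, rfl⟩ | ⟨rfl, _⟩)
        · exact hnr hr'
        · exact hiF hxF
        · exact hiF hyF
      · rintro ⟨(⟨_, hxC', _⟩ | ⟨⟨_, hxC'⟩, _⟩ | ⟨rfl, _⟩ | ⟨_, _, _, _, hr'⟩), _⟩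
        · exact hxC hxC'
        · exact hxC hxC'
        · exact hiF hxF
        · exact hnr hr'

lemma Dminus_eq (pr : FENPref P i) (C : Finset P) :
    {p : P × P | p.1 ∈ insert i pr.enemies ∧ p.2 ∈ insert i pr.enemies ∧
      strictOf pr.prefMinus p.1 p.2 ∧ ¬ strictOf (pr.coalMinus C) p.1 p.2} =
    {p : P × P | (p.2 ∈ pr.enemies ∧ p.2 ∈ C) ∧
      (p.1 = i ∨ (p.1 ∈ pr.enemies ∧ strictOf pr.Rm p.1 p.2))} := by
  have hiE := pr.self_not_enemy
  ext ⟨x, y⟩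
  simp only [Set.mem_setOf_eq]
  constructor
  · rintro ⟨hx, hy, ⟨h1, h2⟩, h3⟩
    rcases h1 with ⟨rfl, rfl⟩ | ⟨rfl, hyE⟩ | ⟨hxE, hyE, hr⟩
    · exact absurd (Or.inl ⟨rfl, rfl⟩) h2
    · -- x = i, y enemy
      have hyC : y ∈ C := by
        by_contra hyC
        apply h3
        refine ⟨Or.inr (Or.inr (Or.inl ⟨rfl, Or.inr ⟨hyE, hyC⟩⟩)), ?_⟩
        rintro (⟨_, _, hiE', _⟩ | ⟨⟨_, hyC'⟩, _⟩ | ⟨rfl, _⟩ | ⟨_, _, hiE', _⟩)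
        · exact hiE hiE'
        · exact hyC hyC'
        · exact hiE hyE
        · exact hiE hiE'
      exact ⟨⟨hyE, hyC⟩, Or.inl rfl⟩
    · -- x, y enemies, Rm x y strict
      have hnr : ¬ pr.Rm y x := fun h => h2 (Or.inr (Or.inr ⟨hyE, hxE, h⟩))
      have hyC : y ∈ C := by
        by_contra hyC
        apply h3
        by_cases hxC : x ∈ C
        · refine ⟨Or.inr (Or.inl ⟨⟨hxE, hxC⟩, Or.inr ⟨hyE, hyC⟩⟩), ?_⟩
          rintro (⟨_, hyC', _⟩ | ⟨⟨_, hyC'⟩, _⟩ | ⟨hyi, _⟩ | ⟨_, _, _, hxC', _⟩)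
          · exact hyC hyC'
          · exact hyC hyC'
          · exact hiE (hyi ▸ hyE)
          · exact hxC' hxC
        · refine ⟨Or.inr (Or.inr (Or.inr ⟨hxE, hxC, hyE, hyC, hr⟩)), ?_⟩
          rintro (⟨_, hyC', _⟩ | ⟨⟨_, hyC'⟩, _⟩ | ⟨hyi, _⟩ | ⟨_, _, _, _, hr'⟩)
          · exact hyC hyC'
          · exact hyC hyC'
          · exact hiE (hyi ▸ hyE)
          · exact hnr hr'
      exact ⟨⟨hyE, hyC⟩, Or.inr ⟨hxE, hr, hnr⟩⟩
  · rintro ⟨⟨hyE, hyC⟩, hx⟩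
    rcases hx with rfl | ⟨hxE, hr, hnr⟩
    · refine ⟨Finset.mem_insert_self _ _, Finset.mem_insert_of_mem hyE,
        ⟨Or.inr (Or.inl ⟨rfl, hyE⟩), ?_⟩, ?_⟩
      · rintro (⟨rfl, _⟩ | ⟨rfl, _⟩ | ⟨_, hiE', _⟩)
        · exact hiE hyE
        · exact hiE hyE
        · exact hiE hiE'
      · rintro ⟨(⟨hiE', _⟩ | ⟨⟨hiE', _⟩, _⟩ | ⟨_, hy1⟩ | ⟨hiE', _⟩), _⟩
        · exact hiE hiE'
        · exact hiE hiE'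
        · rcases hy1 with rfl | ⟨_, hyC'⟩
          · exact hiE hyE
          · exact hyC' hyC
        · exact hiE hiE'
    · refine ⟨Finset.mem_insert_of_mem hxE, Finset.mem_insert_of_mem hyE,
        ⟨Or.inr (Or.inr ⟨hxE, hyE, hr⟩), ?_⟩, ?_⟩
      · rintro (⟨rfl, _⟩ | ⟨rfl, _⟩ | ⟨_, _, hr'⟩)
        · exact hiE hyE
        · exact hiE hyE
        · exact hnr hr'
      · rintro ⟨(⟨_, _, _, _, hr'⟩ | ⟨_, hy1⟩ | ⟨rfl, _⟩ | ⟨_, _, _, hyC', _⟩), _⟩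
        · exact hnr hr'
        · rcases hy1 with rfl | ⟨_, hyC'⟩
          · exact hiE hyE
          · exact hyC' hyC
        · exact hiE hxE
        · exact hyC' hyC

end DSets
section Count

variable {P : Type*} [DecidableEq P] {i : P}

lemma deltaPlus_eq (pr : FENPref P i) (C : Finset P) :
    pr.deltaPlus C = ∑ x ∈ pr.friends \ C,
      (1 + Set.ncard {b : P | b ∈ pr.friends ∧ strictOf pr.Rp x b}) := by
  classical
  rw [FENPref.deltaPlus, dirTau_eq_ncard (wo_prefPlus pr) (wo_coalPlus pr C), Dplus_eq]
  have hset : {p : P × P | (p.1 ∈ pr.friends ∧ p.1 ∉ C) ∧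
      (p.2 = i ∨ (p.2 ∈ pr.friends ∧ strictOf pr.Rp p.1 p.2))} =
      ↑(((pr.friends \ C) ×ˢ (insert i pr.friends)).filter
        (fun p => p.2 = i ∨ (p.2 ∈ pr.friends ∧ strictOf pr.Rp p.1 p.2))) := by
    ext ⟨x, y⟩
    simp only [Set.mem_setOf_eq, Finset.coe_filter, Finset.mem_product, Finset.mem_sdiff,
      Finset.mem_insert]
    constructor
    · rintro ⟨⟨hxF, hxC⟩, hy⟩
      refine ⟨⟨⟨hxF, hxC⟩, ?_⟩, hy⟩
      rcases hy with rfl | ⟨hyF, _⟩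
      · exact Or.inl rfl
      · exact Or.inr hyF
    · rintro ⟨⟨⟨hxF, hxC⟩, _⟩, hy⟩
      exact ⟨⟨hxF, hxC⟩, hy⟩
  rw [hset, Set.ncard_coe_finset, Finset.card_filter, Finset.sum_product]
  refine Finset.sum_congr rfl ?_
  intro x hx
  rw [← Finset.card_filter, Finset.filter_insert, if_pos (Or.inl rfl)]
  rw [Finset.card_insert_of_notMem (fun h => pr.self_not_friend (Finset.mem_of_mem_filter _ h))]
  have h1 : pr.friends.filter (fun y => y = i ∨ (y ∈ pr.friends ∧ strictOf pr.Rp x y)) =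
      pr.friends.filter (fun y => strictOf pr.Rp x y) := by
    refine Finset.filter_congr ?_
    intro y hyF
    constructor
    · rintro (rfl | ⟨_, hs⟩)
      · exact absurd hyF pr.self_not_friend
      · exact hs
    · intro hs
      exact Or.inr ⟨hyF, hs⟩
  have h2 : {b : P | b ∈ pr.friends ∧ strictOf pr.Rp x b} =
      ↑(pr.friends.filter (fun y => strictOf pr.Rp x y)) := by
    ext b; simp [Finset.mem_filter]
  rw [h1, h2, Set.ncard_coe_finset, add_comm]

lemma deltaMinus_eq (pr : FENPref P i) (C : Finset P) :
    pr.deltaMinus C = ∑ y ∈ pr.enemies ∩ C,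
      (1 + Set.ncard {f : P | f ∈ pr.enemies ∧ strictOf pr.Rm f y}) := by
  classical
  rw [FENPref.deltaMinus, dirTau_eq_ncard (wo_prefMinus pr) (wo_coalMinus pr C), Dminus_eq]
  have hset : {p : P × P | (p.2 ∈ pr.enemies ∧ p.2 ∈ C) ∧
      (p.1 = i ∨ (p.1 ∈ pr.enemies ∧ strictOf pr.Rm p.1 p.2))} =
      ↑(((insert i pr.enemies) ×ˢ (pr.enemies ∩ C)).filter
        (fun p => p.1 = i ∨ (p.1 ∈ pr.enemies ∧ strictOf pr.Rm p.1 p.2))) := by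
    ext ⟨x, y⟩
    simp only [Set.mem_setOf_eq, Finset.coe_filter, Finset.mem_product, Finset.mem_inter,
      Finset.mem_insert]
    constructor
    · rintro ⟨⟨hyE, hyC⟩, hx⟩
      refine ⟨⟨?_, hyE, hyC⟩, hx⟩
      rcases hx with rfl | ⟨hxE, _⟩
      · exact Or.inl rfl
      · exact Or.inr hxE
    · rintro ⟨⟨_, hyE, hyC⟩, hx⟩
      exact ⟨⟨hyE, hyC⟩, hx⟩
  rw [hset, Set.ncard_coe_finset, Finset.card_filter, Finset.sum_product_right]
  refine Finset.sum_congr rfl ?_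
  intro y hy
  rw [← Finset.card_filter, Finset.filter_insert, if_pos (Or.inl rfl)]
  rw [Finset.card_insert_of_notMem (fun h => pr.self_not_enemy (Finset.mem_of_mem_filter _ h))]
  have h1 : pr.enemies.filter (fun x => x = i ∨ (x ∈ pr.enemies ∧ strictOf pr.Rm x y)) =
      pr.enemies.filter (fun x => strictOf pr.Rm x y) := by
    refine Finset.filter_congr ?_
    intro x hxE
    constructor
    · rintro (rfl | ⟨_, hs⟩)
      · exact absurd hxE pr.self_not_enemy
      · exact hs
    · intro hs
      exact Or.inr ⟨hxE, hs⟩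
  have h2 : {f : P | f ∈ pr.enemies ∧ strictOf pr.Rm f y} =
      ↑(pr.enemies.filter (fun x => strictOf pr.Rm x y)) := by
    ext b; simp [Finset.mem_filter]
  rw [h1, h2, Set.ncard_coe_finset, add_comm]

end Count
/-- Additive separability: define `u_i(j) = 1 + |{b ∈ N⁺_i : j ▷_i b}|` for friends `j`,
`u_i(j) = −(1 + |{f ∈ N⁻_i : f ▷_i j}|)` for enemies `j`, and `u_i(j) = 0` for all other
players `j ≠ i`. Then for all coalitions `A, B` containing `i`:
`δ(⊵_i,A) ≤ δ(⊵_i,B)` iff `Σ_{j ∈ A∖{i}} u_i(j) ≥ Σ_{j ∈ B∖{i}} u_i(j)`. -/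
theorem additively_separable {P : Type*} [DecidableEq P] {i : P} (pr : FENPref P i)
    (u : P → ℤ)
    (hu_friend : ∀ j ∈ pr.friends,
      u j = 1 + (Set.ncard {b : P | b ∈ pr.friends ∧ strictOf pr.Rp j b} : ℤ))
    (hu_enemy : ∀ j ∈ pr.enemies,
      u j = -(1 + (Set.ncard {f : P | f ∈ pr.enemies ∧ strictOf pr.Rm f j} : ℤ)))
    (hu_neutral : ∀ j : P, j ≠ i → j ∉ pr.friends → j ∉ pr.enemies → u j = 0)
    (A B : Finset P) (hiA : i ∈ A) (hiB : i ∈ B) :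
    pr.delta A ≤ pr.delta B ↔ ∑ j ∈ B.erase i, u j ≤ ∑ j ∈ A.erase i, u j := by
  have hiF := pr.self_not_friend
  have hiE := pr.self_not_enemy
  have hform : ∀ C : Finset P, (pr.delta C : ℤ) =
      (∑ j ∈ pr.friends, u j) - ∑ j ∈ C.erase i, u j := by
    intro C
    have h1 : (pr.deltaPlus C : ℤ) = ∑ x ∈ pr.friends \ C, u x := by
      rw [deltaPlus_eq]
      push_cast
      refine Finset.sum_congr rfl fun x hx => ?_
      rw [hu_friend x (Finset.mem_sdiff.mp hx).1]
    have h2 : (pr.deltaMinus C : ℤ) = - ∑ x ∈ pr.enemies ∩ C, u x := by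
      rw [deltaMinus_eq]
      push_cast
      rw [← Finset.sum_neg_distrib]
      refine Finset.sum_congr rfl fun x hx => ?_
      rw [hu_enemy x (Finset.mem_inter.mp hx).1]
      ring
    have hdelta : (pr.delta C : ℤ) = ∑ x ∈ pr.friends \ C, u x - ∑ x ∈ pr.enemies ∩ C, u x := by
      rw [FENPref.delta]
      push_cast
      rw [h1, h2]
      ring
    have hsplitF : ∑ j ∈ pr.friends ∩ C, u j + ∑ j ∈ pr.friends \ C, u j =
        ∑ j ∈ pr.friends, u j := Finset.sum_inter_add_sum_sdiff _ _ _
    have hCsplit : ∑ j ∈ C.erase i, u j =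
        ∑ j ∈ pr.friends ∩ C, u j + ∑ j ∈ pr.enemies ∩ C, u j := by
      rw [← Finset.sum_inter_add_sum_sdiff (C.erase i) pr.friends u]
      have e1 : (C.erase i) ∩ pr.friends = pr.friends ∩ C := by
        ext x
        simp only [Finset.mem_inter, Finset.mem_erase]
        constructor
        · rintro ⟨⟨_, hxC⟩, hxF⟩
          exact ⟨hxF, hxC⟩
        · rintro ⟨hxF, hxC⟩
          exact ⟨⟨fun h => hiF (h ▸ hxF), hxC⟩, hxF⟩
      have e2 : ∑ j ∈ (C.erase i) \ pr.friends, u j = ∑ j ∈ pr.enemies ∩ C, u j := by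
        rw [← Finset.sum_inter_add_sum_sdiff ((C.erase i) \ pr.friends) pr.enemies u]
        have e3 : ((C.erase i) \ pr.friends) ∩ pr.enemies = pr.enemies ∩ C := by
          ext x
          simp only [Finset.mem_inter, Finset.mem_sdiff, Finset.mem_erase]
          constructor
          · rintro ⟨⟨⟨_, hxC⟩, _⟩, hxE⟩
            exact ⟨hxE, hxC⟩
          · rintro ⟨hxE, hxC⟩
            exact ⟨⟨⟨fun h => hiE (h ▸ hxE), hxC⟩, fun h => Finset.disjoint_left.mp pr.disj h hxE⟩, hxE⟩
        have e4 : ∑ j ∈ ((C.erase i) \ pr.friends) \ pr.enemies, u j = 0 := by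
          refine Finset.sum_eq_zero fun x hx => ?_
          simp only [Finset.mem_sdiff, Finset.mem_erase] at hx
          exact hu_neutral x hx.1.1.1 hx.1.2 hx.2
        rw [e3, e4, add_zero]
      rw [e1, e2]
    rw [hdelta]
    rw [hCsplit]
    linarith
  constructor
  · intro h
    have h' : (pr.delta A : ℤ) ≤ (pr.delta B : ℤ) := Nat.cast_le.mpr h
    rw [hform A, hform B] at h'
    linarith
  · intro h
    have h' : (pr.delta A : ℤ) ≤ (pr.delta B : ℤ) := by
      rw [hform A, hform B]
      linarith
    exact Nat.cast_le.mp h'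
end

section
/- A FEN-hedonic game with distance-based preferences admits a perfect coalition structure if and only if for all players i and j that are connected by a path in the undirected friendship graph (which has an edge between players u and v whenever v ∈ N⁺_u or u ∈ N⁺_v), it holds that j ∉ N⁻_i. -/
/-! Coalition structures and stability notions. -/

section Structures

variable {P : Type*} [DecidableEq P] [Fintype P]

/-- A coalition structure: a partition of the player set into nonempty coalitions. -/
def IsCoalitionStructure (Γ : Finset (Finset P)) : Prop :=
  ∅ ∉ Γ ∧ ∀ x : P, ∃! C, C ∈ Γ ∧ x ∈ C

/-- `Γ` is Nash stable: no player `k` and no coalition `C ∈ Γ ∪ {∅}` such that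
`k` strictly prefers `C ∪ {k}` to `k`'s own coalition. -/
def NashStable (pr : ∀ k : P, FENPref P k) (Γ : Finset (Finset P)) : Prop :=
  ¬ ∃ (k : P) (Ck C : Finset P), Ck ∈ Γ ∧ k ∈ Ck ∧ (C ∈ Γ ∨ C = ∅) ∧
      (pr k).delta (insert k C) < (pr k).delta Ck

/-- `Γ` is individually stable: no Nash deviation where the deviating player
is moreover welcome in the new coalition. -/
def IndividuallyStable (pr : ∀ k : P, FENPref P k) (Γ : Finset (Finset P)) : Prop :=
  ¬ ∃ (k : P) (Ck C : Finset P), Ck ∈ Γ ∧ k ∈ Ck ∧ (C ∈ Γ ∨ C = ∅) ∧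
      (pr k).delta (insert k C) < (pr k).delta Ck ∧
      ∀ j ∈ C, (pr j).delta (insert k C) ≤ (pr j).delta C

/-- `Γ` is contractually individually stable: no individual-stability deviation
where the deviating player is moreover not bound to the former coalition. -/
def ContractuallyIndividuallyStable (pr : ∀ k : P, FENPref P k) (Γ : Finset (Finset P)) : Prop :=
  ¬ ∃ (k : P) (Ck C : Finset P), Ck ∈ Γ ∧ k ∈ Ck ∧ (C ∈ Γ ∨ C = ∅) ∧
      (pr k).delta (insert k C) < (pr k).delta Ck ∧
      (∀ j ∈ C, (pr j).delta (insert k C) ≤ (pr j).delta C) ∧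
      (∀ j ∈ Ck.erase k, (pr j).delta (Ck.erase k) ≤ (pr j).delta Ck)

/-- `Γ` is perfect: every player is in one of their most preferred coalitions. -/
def PerfectStructure (pr : ∀ k : P, FENPref P k) (Γ : Finset (Finset P)) : Prop :=
  ∀ k : P, ∀ Ck ∈ Γ, k ∈ Ck → ∀ C : Finset P, k ∈ C → (pr k).delta Ck ≤ (pr k).delta C

end Structures
section AuxLemmas
variable {P : Type*}

lemma kendallTau_self_eq_zero {S : Finset P} {B : P → P → Prop}
    (hirr : ∀ x ∈ S, ¬ B x x)
    (htr : ∀ x ∈ S, ∀ y ∈ S, ∀ z ∈ S, B x y → B y z → B x z) :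
    kendallTau S B B = 0 := by
  have : {p : P × P | p.1 ∈ S ∧ p.2 ∈ S ∧ B p.1 p.2 ∧ B p.2 p.1} = ∅ := by
    ext ⟨a, b⟩
    simp only [Set.mem_setOf_eq, Set.mem_empty_iff_false, iff_false]
    rintro ⟨ha, hb, h1, h2⟩
    exact hirr a ha (htr a ha b hb a ha h1 h2)
  simp [kendallTau, this]

lemma kendallTau_le (S : Finset P) (A B : P → P → Prop) :
    kendallTau S A B ≤ S.card * S.card := by
  classical
  have hsub : {p : P × P | p.1 ∈ S ∧ p.2 ∈ S ∧ A p.1 p.2 ∧ B p.2 p.1} ⊆ ↑(S ×ˢ S) := by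
    rintro ⟨a, b⟩ ⟨ha, hb, -⟩
    simp [Finset.mem_product, ha, hb]
  calc kendallTau S A B ≤ (↑(S ×ˢ S) : Set (P × P)).ncard :=
        Set.ncard_le_ncard hsub (S ×ˢ S).finite_toSet
    _ = S.card * S.card := by rw [Set.ncard_coe_finset, Finset.card_product]

lemma exists_linExtOn [Fintype P] (S : Finset P) (R : P → P → Prop)
    (htr : ∀ x ∈ S, ∀ y ∈ S, ∀ z ∈ S, R x y → R y z → R x z) :
    ∃ A, IsLinExtOn S R A := by
  classical
  set f : P → ℕ := fun x => ((Fintype.equivFin P) x : ℕ) with hfdef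
  have hf : Function.Injective f := by
    intro a b h
    exact (Fintype.equivFin P).injective (Fin.val_injective h)
  set rk : P → ℕ := fun x => (S.filter (fun z => strictOf R z x)).card with hrk
  refine ⟨fun x y => rk x < rk y ∨ (rk x = rk y ∧ f x < f y), ?_, ?_, ?_, ?_⟩
  · intro x _; simp
  · rintro x _ y _ z _ (h | ⟨h, h'⟩) (g | ⟨g, g'⟩)
    · exact Or.inl (h.trans g)
    · exact Or.inl (g ▸ h)
    · exact Or.inl (h ▸ g)
    · exact Or.inr ⟨h.trans g, h'.trans g'⟩
  · intro x _ y _ hxy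
    rcases lt_trichotomy (rk x) (rk y) with h | h | h
    · exact Or.inl (Or.inl h)
    · rcases lt_or_gt_of_ne (fun he => hxy (hf he)) with h' | h'
      · exact Or.inl (Or.inr ⟨h, h'⟩)
      · exact Or.inr (Or.inr ⟨h.symm, h'⟩)
    · exact Or.inr (Or.inl h)
  · intro x hx y hy hs
    left
    apply Finset.card_lt_card
    constructor
    · intro z hz
      rw [Finset.mem_filter] at hz ⊢
      obtain ⟨hzS, hzx, hnxz⟩ := hz
      refine ⟨hzS, htr z hzS x hx y hy hzx hs.1, fun hyz => hnxz ?_⟩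
      exact htr x hx y hy z hzS hs.1 hyz
    · intro hsub
      have hxmem : x ∈ S.filter (fun z => strictOf R z y) :=
        Finset.mem_filter.mpr ⟨hx, hs⟩
      have := hsub hxmem
      rw [Finset.mem_filter] at this
      exact this.2.2 this.2.1

end AuxLemmas
section DirTau
variable {P : Type*}

lemma dirTau_eq_zero (S : Finset P) (R1 R2 : P → P → Prop)
    (h : ∀ x ∈ S, ∀ y ∈ S, strictOf R1 x y → strictOf R2 x y) :
    dirTau S R1 R2 = 0 := by
  refine Nat.eq_zero_of_le_zero (csSup_le' ?_)
  rintro n ⟨B, hB, rfl⟩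
  have hAB : IsLinExtOn S R1 B :=
    ⟨hB.irrefl, hB.trans, hB.total,
      fun x hx y hy hs => hB.extend x hx y hy (h x hx y hy hs)⟩
  have h0 : kendallTau S B B = 0 := kendallTau_self_eq_zero hB.irrefl hB.trans
  exact Nat.sInf_le ⟨B, hAB, h0.symm⟩

lemma dirTau_pos [Fintype P] (S : Finset P) (R1 R2 : P → P → Prop)
    (htr1 : ∀ x ∈ S, ∀ y ∈ S, ∀ z ∈ S, R1 x y → R1 y z → R1 x z)
    (htr2 : ∀ x ∈ S, ∀ y ∈ S, ∀ z ∈ S, R2 x y → R2 y z → R2 x z)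
    {a b : P} (ha : a ∈ S) (hb : b ∈ S)
    (h1 : strictOf R1 a b) (h2 : strictOf R2 b a) : 1 ≤ dirTau S R1 R2 := by
  classical
  obtain ⟨A0, hA0⟩ := exists_linExtOn S R1 htr1
  obtain ⟨B, hB⟩ := exists_linExtOn S R2 htr2
  have hbdd : BddAbove { n : ℕ | ∃ B : P → P → Prop, IsLinExtOn S R2 B ∧
      n = sInf { m : ℕ | ∃ A : P → P → Prop, IsLinExtOn S R1 A ∧ m = kendallTau S A B } } := by
    refine ⟨S.card * S.card, ?_⟩
    rintro n ⟨B', hB', rfl⟩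
    exact le_trans (Nat.sInf_le ⟨A0, hA0, rfl⟩) (kendallTau_le S A0 B')
  refine le_trans ?_ (le_csSup hbdd ⟨B, hB, rfl⟩)
  refine le_csInf ⟨_, A0, hA0, rfl⟩ ?_
  rintro m ⟨A, hA, rfl⟩
  have hfin : {p : P × P | p.1 ∈ S ∧ p.2 ∈ S ∧ A p.1 p.2 ∧ B p.2 p.1}.Finite := by
    apply Set.Finite.subset (S ×ˢ S).finite_toSet
    rintro ⟨u, v⟩ ⟨hu, hv, -⟩
    simp [Finset.mem_product, hu, hv]
  have hmem : (a, b) ∈ {p : P × P | p.1 ∈ S ∧ p.2 ∈ S ∧ A p.1 p.2 ∧ B p.2 p.1} :=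
    ⟨ha, hb, hA.extend a ha b hb h1, hB.extend b hb a ha h2⟩
  have : 0 < kendallTau S A B := by
    rw [kendallTau]
    exact (Set.ncard_pos hfin).mpr ⟨_, hmem⟩
  omega

end DirTau
section GameAux
variable {P : Type*} {i : P}

lemma prefPlus_trans (pr : FENPref P i) :
    ∀ x y z, pr.prefPlus x y → pr.prefPlus y z → pr.prefPlus x z := by
  intro x y z hxy hyz
  have hni := pr.self_not_friend
  have hT := pr.wo_p.trans
  unfold FENPref.prefPlus at *
  rcases hxy with ⟨hxf, hyf, h1⟩ | ⟨hxf, hy⟩ | ⟨hx, hy⟩ <;>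
    rcases hyz with ⟨hyf', hzf, h2⟩ | ⟨hyf', hz⟩ | ⟨hy', hz⟩ <;> subst_vars <;>
      first
      | exact Or.inl ⟨hxf, hzf, hT _ hxf _ hyf _ hzf h1 h2⟩
      | tauto

set_option maxHeartbeats 2000000 in
lemma coalPlus_trans (pr : FENPref P i) (C : Finset P) :
    ∀ x y z, pr.coalPlus C x y → pr.coalPlus C y z → pr.coalPlus C x z := by
  intro x y z hxy hyz
  have hni := pr.self_not_friend
  have hT := pr.wo_p.trans
  unfold FENPref.coalPlus at *
  rcases hxy with ⟨hxf, hxC, hyf, hyC, hR⟩ | ⟨⟨hxf, hxC⟩, hyi | ⟨hyf, hyNC⟩⟩ |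
      ⟨hxi, hyi | ⟨hyf, hyNC⟩⟩ | ⟨hxf, hxNC, hyf, hyNC, hR⟩ <;>
    rcases hyz with ⟨hyf', hyC', hzf, hzC, hR'⟩ | ⟨⟨hyf', hyC'⟩, hzi | ⟨hzf, hzNC⟩⟩ |
        ⟨hyi', hzi | ⟨hzf, hzNC⟩⟩ | ⟨hyf', hyNC', hzf, hzNC, hR'⟩ <;>
      subst_vars <;>
      first
      | tauto
      | exact Or.inl ⟨hxf, hxC, hzf, hzC, hT _ hxf _ hyf _ hzf hR hR'⟩
      | exact Or.inr (Or.inr (Or.inr ⟨hxf, hxNC, hzf, hzNC, hT _ hzf _ hyf _ hxf hR' hR⟩))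

lemma prefMinus_trans (pr : FENPref P i) :
    ∀ x y z, pr.prefMinus x y → pr.prefMinus y z → pr.prefMinus x z := by
  intro x y z hxy hyz
  have hni := pr.self_not_enemy
  have hT := pr.wo_m.trans
  unfold FENPref.prefMinus at *
  rcases hxy with ⟨hx, hy⟩ | ⟨hx, hy⟩ | ⟨hx, hy, h1⟩ <;>
    rcases hyz with ⟨hy', hz⟩ | ⟨hy', hz⟩ | ⟨hy', hz, h2⟩ <;> subst_vars <;>
      first
      | tauto
      | exact Or.inr (Or.inr ⟨hx, hz, hT _ hx _ hy _ hz h1 h2⟩)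

set_option maxHeartbeats 2000000 in
lemma coalMinus_trans (pr : FENPref P i) (C : Finset P) :
    ∀ x y z, pr.coalMinus C x y → pr.coalMinus C y z → pr.coalMinus C x z := by
  intro x y z hxy hyz
  have hni := pr.self_not_enemy
  have hT := pr.wo_m.trans
  unfold FENPref.coalMinus at *
  rcases hxy with ⟨hxe, hxC, hye, hyC, hR⟩ | ⟨⟨hxe, hxC⟩, hyi | ⟨hye, hyNC⟩⟩ |
      ⟨hxi, hyi | ⟨hye, hyNC⟩⟩ | ⟨hxe, hxNC, hye, hyNC, hR⟩ <;>
    rcases hyz with ⟨hye', hyC', hze, hzC, hR'⟩ | ⟨⟨hye', hyC'⟩, hzi | ⟨hze, hzNC⟩⟩ |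
        ⟨hyi', hzi | ⟨hze, hzNC⟩⟩ | ⟨hye', hyNC', hze, hzNC, hR'⟩ <;>
      subst_vars <;>
      first
      | tauto
      | exact Or.inl ⟨hxe, hxC, hze, hzC, hT _ hze _ hye _ hxe hR' hR⟩
      | exact Or.inr (Or.inr (Or.inr ⟨hxe, hxNC, hze, hzNC, hT _ hxe _ hye _ hze hR hR'⟩))

end GameAux
section DeltaAux
variable {P : Type*} {i : P} [DecidableEq P]

lemma strict_prefPlus_coalPlus (pr : FENPref P i) {C : Finset P}
    (hsub : pr.friends ⊆ C) :
    ∀ x y, strictOf pr.prefPlus x y → strictOf (pr.coalPlus C) x y := by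
  intro x y ⟨hxy, hnyx⟩
  have hni := pr.self_not_friend
  rcases hxy with ⟨hxf, hyf, hR⟩ | ⟨hxf, hy⟩ | ⟨hx, hy⟩
  · refine ⟨Or.inl ⟨hxf, hsub hxf, hyf, hsub hyf, hR⟩, ?_⟩
    rintro (⟨_, _, _, _, hR'⟩ | ⟨⟨hyf', hyC⟩, hxi | ⟨hxf', hxNC⟩⟩ | ⟨hyi, _⟩ |
        ⟨_, hyNC, _, _, _⟩)
    · exact hnyx (Or.inl ⟨hyf, hxf, hR'⟩)
    · exact hni (hxi ▸ hxf)
    · exact hxNC (hsub hxf)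
    · exact hni (hyi ▸ hyf)
    · exact hyNC (hsub hyf)
  · subst hy
    refine ⟨Or.inr (Or.inl ⟨⟨hxf, hsub hxf⟩, Or.inl rfl⟩), ?_⟩
    rintro (⟨hif, _⟩ | ⟨⟨hif, _⟩, _⟩ | ⟨_, hxi | ⟨_, hxNC⟩⟩ | ⟨hif, _⟩)
    · exact hni hif
    · exact hni hif
    · exact hni (hxi ▸ hxf)
    · exact hxNC (hsub hxf)
    · exact hni hif
  · exact absurd (Or.inr (Or.inr ⟨hy, hx⟩)) hnyx

lemma strict_prefMinus_coalMinus (pr : FENPref P i) {C : Finset P}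
    (hdis : ∀ e ∈ pr.enemies, e ∉ C) :
    ∀ x y, strictOf pr.prefMinus x y → strictOf (pr.coalMinus C) x y := by
  intro x y ⟨hxy, hnyx⟩
  have hni := pr.self_not_enemy
  rcases hxy with ⟨hx, hy⟩ | ⟨hx, hye⟩ | ⟨hxe, hye, hR⟩
  · exact absurd (Or.inl ⟨hy, hx⟩) hnyx
  · subst hx
    refine ⟨Or.inr (Or.inr (Or.inl ⟨rfl, Or.inr ⟨hye, hdis y hye⟩⟩)), ?_⟩
    rintro (⟨_, hyC, _⟩ | ⟨⟨_, hyC⟩, _⟩ | ⟨hyi, _⟩ | ⟨_, _, hie, _⟩)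
    · exact hdis y hye hyC
    · exact hdis y hye hyC
    · exact hni (hyi ▸ hye)
    · exact hni hie
  · refine ⟨Or.inr (Or.inr (Or.inr ⟨hxe, hdis x hxe, hye, hdis y hye, hR⟩)), ?_⟩
    rintro (⟨_, hyC, _⟩ | ⟨⟨_, hyC⟩, _⟩ | ⟨hyi, _⟩ | ⟨_, _, _, _, hR'⟩)
    · exact hdis y hye hyC
    · exact hdis y hye hyC
    · exact hni (hyi ▸ hye)
    · exact hnyx (Or.inr (Or.inr ⟨hye, hxe, hR'⟩))

lemma delta_eq_zero (pr : FENPref P i) {C : Finset P}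
    (hsub : pr.friends ⊆ C) (hdis : ∀ e ∈ pr.enemies, e ∉ C) :
    pr.delta C = 0 := by
  have h1 : pr.deltaPlus C = 0 :=
    dirTau_eq_zero _ _ _ (fun x _ y _ h => strict_prefPlus_coalPlus pr hsub x y h)
  have h2 : pr.deltaMinus C = 0 :=
    dirTau_eq_zero _ _ _ (fun x _ y _ h => strict_prefMinus_coalMinus pr hdis x y h)
  simp [FENPref.delta, h1, h2]

lemma deltaPlus_pos [Fintype P] (pr : FENPref P i) {C : Finset P} {f : P}
    (hf : f ∈ pr.friends) (hfC : f ∉ C) : 1 ≤ pr.deltaPlus C := by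
  have hni := pr.self_not_friend
  refine dirTau_pos _ _ _
    (fun x _ y _ z _ => prefPlus_trans pr x y z)
    (fun x _ y _ z _ => coalPlus_trans pr C x y z)
    (Finset.mem_insert_of_mem hf) (Finset.mem_insert_self i pr.friends) ?_ ?_
  · refine ⟨Or.inr (Or.inl ⟨hf, rfl⟩), ?_⟩
    rintro (⟨hif, _⟩ | ⟨hif, _⟩ | ⟨_, hfi⟩)
    · exact hni hif
    · exact hni hif
    · exact hni (hfi ▸ hf)
  · refine ⟨Or.inr (Or.inr (Or.inl ⟨rfl, Or.inr ⟨hf, hfC⟩⟩)), ?_⟩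
    rintro (⟨_, hfC', _⟩ | ⟨⟨_, hfC'⟩, _⟩ | ⟨hfi, _⟩ | ⟨_, _, hif, _⟩)
    · exact hfC hfC'
    · exact hfC hfC'
    · exact hni (hfi ▸ hf)
    · exact hni hif

lemma deltaMinus_pos [Fintype P] (pr : FENPref P i) {C : Finset P} {e : P}
    (he : e ∈ pr.enemies) (heC : e ∈ C) : 1 ≤ pr.deltaMinus C := by
  have hni := pr.self_not_enemy
  refine dirTau_pos _ _ _
    (fun x _ y _ z _ => prefMinus_trans pr x y z)
    (fun x _ y _ z _ => coalMinus_trans pr C x y z)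
    (Finset.mem_insert_self i pr.enemies) (Finset.mem_insert_of_mem he) ?_ ?_
  · refine ⟨Or.inr (Or.inl ⟨rfl, he⟩), ?_⟩
    rintro (⟨hei, _⟩ | ⟨hei, hie⟩ | ⟨_, hie, _⟩)
    · exact hni (hei ▸ he)
    · exact hni (hei ▸ he)
    · exact hni hie
  · refine ⟨Or.inr (Or.inl ⟨⟨he, heC⟩, Or.inl rfl⟩), ?_⟩
    rintro (⟨hie, _⟩ | ⟨⟨hie, _⟩, _⟩ | ⟨_, hei | ⟨_, heNC⟩⟩ | ⟨hie, _⟩)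
    · exact hni hie
    · exact hni hie
    · exact hni (hei ▸ he)
    · exact heNC heC
    · exact hni hie

end DeltaAux

/-- A FEN-hedonic game with distance-based preferences admits a perfect coalition
structure iff for all players `i` and `j` connected by a path in the undirected
friendship graph (edge between `u` and `v` whenever `v ∈ N⁺_u` or `u ∈ N⁺_v`),
`j` is not an enemy of `i`. -/
theorem exists_perfect_iff {P : Type*} [DecidableEq P] [Fintype P]
    (pr : ∀ k : P, FENPref P k) :
    (∃ Γ : Finset (Finset P), IsCoalitionStructure Γ ∧ PerfectStructure pr Γ) ↔
      ∀ i j : P,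
        Relation.ReflTransGen (fun u v => v ∈ (pr u).friends ∨ u ∈ (pr v).friends) i j →
          j ∉ (pr i).enemies := by
  classical
  set edge : P → P → Prop := fun u v => v ∈ (pr u).friends ∨ u ∈ (pr v).friends with hedge
  constructor
  · -- forward direction
    rintro ⟨Γ, ⟨hne, huniq⟩, hperf⟩ i j hpath hje
    choose Ck h1 h2 using huniq
    -- each player's own coalition has delta 0
    have h0 : ∀ k : P, (pr k).delta (Ck k) = 0 := by
      intro k
      have hC0 : (pr k).delta (insert k (pr k).friends) = 0 := by
        refine delta_eq_zero _ (Finset.subset_insert _ _) ?_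
        intro e he heC
        rcases Finset.mem_insert.mp heC with rfl | hef
        · exact (pr _).self_not_enemy he
        · exact (Finset.disjoint_right.mp (pr k).disj he) hef
      have := hperf k (Ck k) (h1 k).1 (h1 k).2 (insert k (pr k).friends)
        (Finset.mem_insert_self _ _)
      omega
    have hfr : ∀ k f, f ∈ (pr k).friends → f ∈ Ck k := by
      intro k f hf
      by_contra hfC
      have := deltaPlus_pos (pr k) hf hfC
      have hd := h0 k
      unfold FENPref.delta at hd
      omega
    have hene : ∀ k e, e ∈ (pr k).enemies → e ∉ Ck k := by
      intro k e he heC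
      have := deltaMinus_pos (pr k) he heC
      have hd := h0 k
      unfold FENPref.delta at hd
      omega
    have hreach : ∀ m : P, Relation.ReflTransGen edge i m → m ∈ Ck i := by
      intro m hm
      induction hm with
      | refl => exact (h1 i).2
      | tail hab hbc ih =>
        rename_i b c
        have hbCb : Ck i = Ck b := h2 b (Ck i) ⟨(h1 i).1, ih⟩
        rcases hbc with hc | hb
        · rw [hbCb]; exact hfr b c hc
        · have hcCb : Ck c = Ck b := h2 b (Ck c) ⟨(h1 c).1, hfr c b hb⟩
          rw [hbCb, ← hcCb]; exact (h1 c).2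
    exact hene i j hje (hreach j hpath)
  · -- backward direction
    intro H
    have hesymm : ∀ u v, edge u v → edge v u := by
      intro u v h; exact h.symm
    have hsymm : ∀ u v, Relation.ReflTransGen edge u v →
        Relation.ReflTransGen edge v u := by
      intro u v h
      induction h with
      | refl => exact Relation.ReflTransGen.refl
      | tail _ hbc ih => exact Relation.ReflTransGen.head (hesymm _ _ hbc) ih
    set comp : P → Finset P :=
      fun k => Finset.univ.filter (fun x => Relation.ReflTransGen edge k x) with hcomp
    have hmem_comp : ∀ k x, x ∈ comp k ↔ Relation.ReflTransGen edge k x := by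
      intro k x; simp [hcomp]
    have hself : ∀ k, k ∈ comp k := fun k => (hmem_comp k k).mpr Relation.ReflTransGen.refl
    have hcomp_eq : ∀ u v, Relation.ReflTransGen edge u v → comp u = comp v := by
      intro u v huv
      ext z
      rw [hmem_comp, hmem_comp]
      exact ⟨fun h => Relation.ReflTransGen.trans (hsymm u v huv) h,
        fun h => Relation.ReflTransGen.trans huv h⟩
    refine ⟨Finset.univ.image comp, ⟨?_, ?_⟩, ?_⟩
    · intro hmem
      obtain ⟨k, -, hk⟩ := Finset.mem_image.mp hmem
      exact absurd (hk ▸ hself k) (Finset.notMem_empty k)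
    · intro x
      refine ⟨comp x, ⟨Finset.mem_image_of_mem comp (Finset.mem_univ x), hself x⟩, ?_⟩
      rintro y ⟨hyΓ, hxy⟩
      obtain ⟨u, -, rfl⟩ := Finset.mem_image.mp hyΓ
      exact hcomp_eq u x ((hmem_comp u x).mp hxy)
    · intro k Ckk hCkk hkC C hkC'
      obtain ⟨u, -, rfl⟩ := Finset.mem_image.mp hCkk
      have hCk : comp u = comp k := hcomp_eq u k ((hmem_comp u k).mp hkC)
      have hz : (pr k).delta (comp u) = 0 := by
        rw [hCk]
        refine delta_eq_zero _ ?_ ?_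
        · intro f hf
          exact (hmem_comp k f).mpr (Relation.ReflTransGen.single (Or.inl hf))
        · intro e he heC
          exact H k e ((hmem_comp k e).mp heC) he
      omega
end
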